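/- arXiv:1207.0338 — 2 statements merged into one kernel-verified Lean document; each statement's English description precedes it below -/
import Mathlib

section
/- Let K₀ ⊂ U(5) be the set of block-diagonal matrices diag(A, B, c) with A, B ∈ SU(2) and |c| = 1, and let g ∈ U(5) be the matrix determined by ge₁ = e₃, ge₂ = −e₄, ge₃ = e₁, ge₄ = e₂, ge₅ = e₅. Then (i) the subspace of traceless 5×5 complex matrices X with hXh⁻¹ = X for all h ∈ K₀ equals { diag(c₁,c₁,c₂,c₂,c₃) : 2c₁+2c₂+c₃ = 0 }, which is 2-dimensional; (ii) g·diag(c₁,c₁,c₂,c₂,c₃)·g⁻¹ = diag(c₂,c₂,c₁,c₁,c₃); consequently the subspace of traceless X fixed by conjugation by all of K₀ and by g is the one-dimensional span ℂ·diag(−1,−1,−1,−1,4). -/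
/-!
STATEMENT 10: Traceless 5×5 complex matrices fixed under conjugation by all
h = diag(A,B,c) ∈ K₀ form { diag(c₁,c₁,c₂,c₂,c₃) : 2c₁+2c₂+c₃ = 0 }
(2-dimensional); the ℤ₄-generator g conjugates diag(c₁,c₁,c₂,c₂,c₃) to
diag(c₂,c₂,c₁,c₁,c₃); hence the joint fixed space is ℂ·diag(−1,−1,−1,−1,4).
-/

noncomputable section

abbrev Mat2 : Type := Matrix (Fin 2) (Fin 2) ℂ

/-- The special unitary group SU(2), as a set of matrices. -/
def SU2 : Set Mat2 := {A | A * A.conjTranspose = 1 ∧ A.det = 1}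

/-- The block-diagonal matrix diag(A, B, c) ∈ U(5). -/
def bd5 (A B : Mat2) (c : ℂ) : Matrix (Fin 5) (Fin 5) ℂ :=
  !![A 0 0, A 0 1, 0, 0, 0;
     A 1 0, A 1 1, 0, 0, 0;
     0, 0, B 0 0, B 0 1, 0;
     0, 0, B 1 0, B 1 1, 0;
     0, 0, 0, 0, c]

/-- The ℤ₄-generator g ∈ U(5): ge₁ = e₃, ge₂ = −e₄, ge₃ = e₁, ge₄ = e₂, ge₅ = e₅. -/
def g5 : Matrix (Fin 5) (Fin 5) ℂ :=
  !![0, 0, 1, 0, 0;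
     0, 0, 0, 1, 0;
     1, 0, 0, 0, 0;
     0, -1, 0, 0, 0;
     0, 0, 0, 0, 1]

/-- The set { diag(c₁,c₁,c₂,c₂,c₃) : 2c₁+2c₂+c₃ = 0 }. -/
def diagSet : Set (Matrix (Fin 5) (Fin 5) ℂ) :=
  {Y | ∃ c₁ c₂ c₃ : ℂ, 2 * c₁ + 2 * c₂ + c₃ = 0 ∧ Y = Matrix.diagonal ![c₁, c₁, c₂, c₂, c₃]}

/-
Conjugation by an invertible h fixes X iff h commutes with X. A matrix commuting with
diag(i, -i, 1, 1, 1) and diag(1, 1, i, -i, 1) in K₀ commutes with their combination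
diag(2 + i, 2 - i, 1 + 2i, 1 - 2i, 3), whose eigenvalues are distinct, so it is diagonal; commuting
with the quarter rotations diag(J, 1₂, 1) and diag(1₂, J, 1) then equalises the entries inside each
SU(2)-block. Conversely diag(c₁, c₁, c₂, c₂, c₃) is scalar on every block of K₀. Conjugation by g
exchanges the two blocks, so a g-fixed point also has c₁ = c₂, and the trace condition gives
c₃ = -4c₁.
-/

open Matrix

namespace Matrix

variable {n R : Type*} [Fintype n] [DecidableEq n] [CommRing R]

theorem mul_mul_nonsing_inv_eq_self_iff_commute {h : Matrix n n R} (hh : IsUnit h)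
    (X : Matrix n n R) : h * X * h⁻¹ = X ↔ Commute h X := by
  obtain ⟨u, rfl⟩ := hh
  rw [← coe_units_inv, Units.mul_inv_eq_iff_eq_mul]
  rfl

theorem isDiag_of_commute_diagonal [NoZeroDivisors R] {d : n → R} (hd : Function.Injective d)
    {X : Matrix n n R} (h : Commute (diagonal d) X) : X.IsDiag := by
  intro i j hij
  have hij' : d i * X i j = X i j * d j := by simpa using congr_fun₂ h.eq i j
  have : (d i - d j) * X i j = 0 := by linear_combination hij'
  exact (mul_eq_zero.1 this).resolve_left (sub_ne_zero.2 (hd.ne hij))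

end Matrix

def bd5Hom : Mat2 × Mat2 × ℂ →* Matrix (Fin 5) (Fin 5) ℂ where
  toFun p := bd5 p.1 p.2.1 p.2.2
  map_one' := by
    ext i j
    fin_cases i <;> fin_cases j <;> simp [bd5, one_apply]
  map_mul' p q := by
    ext i j
    fin_cases i <;> fin_cases j <;> simp [bd5, mul_apply, Fin.sum_univ_succ]

theorem isUnit_bd5 {A B : Mat2} {c : ℂ} (hA : IsUnit A) (hB : IsUnit B) (hc : c ≠ 0) :
    IsUnit (bd5 A B c) :=
  IsUnit.map bd5Hom (x := (A, B, c)) (Prod.isUnit_iff.2 ⟨hA, Prod.isUnit_iff.2 ⟨hB, hc.isUnit⟩⟩)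

theorem isUnit_of_mem_SU2 {A : Mat2} (hA : A ∈ SU2) : IsUnit A :=
  (isUnit_iff_isUnit_det A).2 (hA.2 ▸ isUnit_one)

theorem forall_bd5_conj_eq_self_iff (X : Matrix (Fin 5) (Fin 5) ℂ) :
    (∀ (A B : Mat2) (c : ℂ), A ∈ SU2 → B ∈ SU2 → ‖c‖ = 1 →
        bd5 A B c * X * (bd5 A B c)⁻¹ = X) ↔
      ∀ (A B : Mat2) (c : ℂ), A ∈ SU2 → B ∈ SU2 → ‖c‖ = 1 → Commute (bd5 A B c) X := by
  refine forall₃_congr fun A B c => imp_congr_right fun hA => imp_congr_right fun hB =>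
    imp_congr_right fun hc => mul_mul_nonsing_inv_eq_self_iff_commute ?_ X
  exact isUnit_bd5 (isUnit_of_mem_SU2 hA) (isUnit_of_mem_SU2 hB)
    (norm_ne_zero_iff.1 (hc ▸ one_ne_zero))

def diagIm : Mat2 := !![Complex.I, 0; 0, -Complex.I]

def rotQuarter : Mat2 := !![0, 1; -1, 0]

theorem one_mem_SU2 : (1 : Mat2) ∈ SU2 := ⟨by simp, by simp⟩

theorem diagIm_mem_SU2 : diagIm ∈ SU2 := by
  refine ⟨?_, by simp [diagIm, det_fin_two]⟩
  ext i j
  fin_cases i <;> fin_cases j <;> simp [diagIm, mul_apply, Fin.sum_univ_two, one_apply]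

theorem rotQuarter_mem_SU2 : rotQuarter ∈ SU2 := by
  refine ⟨?_, by simp [rotQuarter, det_fin_two]⟩
  ext i j
  fin_cases i <;> fin_cases j <;> simp [rotQuarter, mul_apply, Fin.sum_univ_two, one_apply]

theorem bd5_diagIm_one : bd5 diagIm 1 1 = diagonal ![Complex.I, -Complex.I, 1, 1, 1] := by
  ext i j
  fin_cases i <;> fin_cases j <;> simp [bd5, diagIm]

theorem bd5_one_diagIm : bd5 1 diagIm 1 = diagonal ![1, 1, Complex.I, -Complex.I, 1] := by
  ext i j
  fin_cases i <;> fin_cases j <;> simp [bd5, diagIm]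

theorem isDiag_of_commute_bd5_diagIm {X : Matrix (Fin 5) (Fin 5) ℂ}
    (h₁ : Commute (bd5 diagIm 1 1) X) (h₂ : Commute (bd5 1 diagIm 1) X) : X.IsDiag := by
  rw [bd5_diagIm_one] at h₁
  rw [bd5_one_diagIm] at h₂
  have hd : Function.Injective ![2 + Complex.I, 2 - Complex.I, 1 + 2 * Complex.I,
      1 - 2 * Complex.I, 3] := by
    intro i j h
    fin_cases i <;> fin_cases j <;> first | rfl | norm_num [Complex.ext_iff] at h
  have hsum : diagonal ![2 + Complex.I, 2 - Complex.I, 1 + 2 * Complex.I, 1 - 2 * Complex.I, 3]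
      = diagonal ![Complex.I, -Complex.I, 1, 1, 1]
        + (2 : ℂ) • diagonal ![1, 1, Complex.I, -Complex.I, 1] := by
    rw [← diagonal_smul, diagonal_add]
    congr 1
    ext i
    fin_cases i <;> simp <;> ring
  refine isDiag_of_commute_diagonal hd ?_
  rw [hsum]
  exact h₁.add_left (h₂.smul_left 2)

theorem apply_zero_eq_apply_one_of_commute_bd5_rotQuarter {v : Fin 5 → ℂ}
    (h : Commute (bd5 rotQuarter 1 1) (diagonal v)) : v 0 = v 1 := by
  simpa [bd5, rotQuarter] using (congr_fun₂ h.eq 0 1).symm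

theorem apply_two_eq_apply_three_of_commute_bd5_rotQuarter {v : Fin 5 → ℂ}
    (h : Commute (bd5 1 rotQuarter 1) (diagonal v)) : v 2 = v 3 := by
  simpa [bd5, rotQuarter] using (congr_fun₂ h.eq 2 3).symm

theorem commute_bd5_diagonal (A B : Mat2) (c c₁ c₂ c₃ : ℂ) :
    Commute (bd5 A B c) (diagonal ![c₁, c₁, c₂, c₂, c₃]) := by
  ext i j
  fin_cases i <;> fin_cases j <;> simp [bd5, mul_comm]

theorem trace_diagonal_fin_five (v : Fin 5 → ℂ) :
    (diagonal v).trace = v 0 + v 1 + v 2 + v 3 + v 4 := by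
  simp [trace_diagonal, Fin.sum_univ_five]

theorem mem_diagSet_iff_commute (X : Matrix (Fin 5) (Fin 5) ℂ) :
    X ∈ diagSet ↔ X.trace = 0 ∧
      ∀ (A B : Mat2) (c : ℂ), A ∈ SU2 → B ∈ SU2 → ‖c‖ = 1 → Commute (bd5 A B c) X := by
  constructor
  · rintro ⟨c₁, c₂, c₃, hc, rfl⟩
    refine ⟨?_, fun A B c _ _ _ => commute_bd5_diagonal A B c c₁ c₂ c₃⟩
    rw [trace_diagonal_fin_five]
    show c₁ + c₁ + c₂ + c₂ + c₃ = 0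
    linear_combination hc
  · rintro ⟨htr, hK⟩
    have hdiag := isDiag_of_commute_bd5_diagIm (hK _ _ _ diagIm_mem_SU2 one_mem_SU2 (by simp))
      (hK _ _ _ one_mem_SU2 diagIm_mem_SU2 (by simp))
    rw [← hdiag.diagonal_diag] at htr hK ⊢
    have h01 := apply_zero_eq_apply_one_of_commute_bd5_rotQuarter
      (hK _ _ _ rotQuarter_mem_SU2 one_mem_SU2 (by simp))
    have h23 := apply_two_eq_apply_three_of_commute_bd5_rotQuarter
      (hK _ _ _ one_mem_SU2 rotQuarter_mem_SU2 (by simp))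
    rw [trace_diagonal_fin_five] at htr
    simp only [diag_apply] at htr h01 h23
    refine ⟨X 0 0, X 2 2, X 4 4, by linear_combination htr + h01 + h23, ?_⟩
    congr 1
    ext i
    fin_cases i <;> simp [h01, h23]

def diagSetParam : ℂ × ℂ →ₗ[ℂ] Matrix (Fin 5) (Fin 5) ℂ :=
  (LinearMap.toSpanSingleton ℂ _ (diagonal ![1, 1, 0, 0, -2])).coprod
    (LinearMap.toSpanSingleton ℂ _ (diagonal ![0, 0, 1, 1, -2]))

theorem diagSetParam_apply (c₁ c₂ : ℂ) :
    diagSetParam (c₁, c₂) = diagonal ![c₁, c₁, c₂, c₂, -2 * c₁ - 2 * c₂] := by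
  simp only [diagSetParam, LinearMap.coprod_apply, LinearMap.toSpanSingleton_apply,
    ← diagonal_smul, diagonal_add]
  congr 1
  ext i
  fin_cases i <;> simp [mul_comm, sub_eq_add_neg]

theorem range_diagSetParam : Set.range diagSetParam = diagSet := by
  ext X
  constructor
  · rintro ⟨⟨c₁, c₂⟩, rfl⟩
    exact ⟨c₁, c₂, _, by ring, diagSetParam_apply c₁ c₂⟩
  · rintro ⟨c₁, c₂, c₃, hc, rfl⟩
    refine ⟨(c₁, c₂), ?_⟩
    rw [diagSetParam_apply, show -2 * c₁ - 2 * c₂ = c₃ by linear_combination -hc]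

theorem diagSetParam_injective : Function.Injective diagSetParam := by
  rintro ⟨a₁, a₂⟩ ⟨b₁, b₂⟩ h
  rw [diagSetParam_apply, diagSetParam_apply] at h
  have hv := diagonal_injective h
  exact Prod.ext (by simpa using congr_fun hv 0) (by simpa using congr_fun hv 2)

theorem finrank_span_diagSet : Module.finrank ℂ (Submodule.span ℂ diagSet) = 2 := by
  rw [← range_diagSetParam, ← LinearMap.coe_range, Submodule.span_eq,
    LinearMap.finrank_range_of_inj diagSetParam_injective]
  simp

theorem g5_mul_transpose : g5 * g5ᵀ = 1 := by
  ext i j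
  fin_cases i <;> fin_cases j <;> simp [g5, mul_apply, Fin.sum_univ_five, one_apply]

theorem g5_conj_diagonal (c₁ c₂ c₃ : ℂ) :
    g5 * diagonal ![c₁, c₁, c₂, c₂, c₃] * g5⁻¹ = diagonal ![c₂, c₂, c₁, c₁, c₃] := by
  rw [inv_eq_right_inv g5_mul_transpose]
  ext i j
  fin_cases i <;> fin_cases j <;> simp [g5, mul_apply, vecMul, dotProduct, Fin.sum_univ_five]

theorem smul_diagonal_neg_one_four (c : ℂ) :
    c • diagonal ![-1, -1, -1, -1, 4] = diagonal ![-c, -c, -c, -c, 4 * c] := by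
  rw [← diagonal_smul]
  congr 1
  ext i
  fin_cases i <;> simp [mul_comm]

theorem mem_diagSet_and_g5_conj_iff (X : Matrix (Fin 5) (Fin 5) ℂ) :
    X ∈ diagSet ∧ g5 * X * g5⁻¹ = X ↔
      X ∈ Set.range (fun c : ℂ => c • diagonal ![-1, -1, -1, -1, 4]) := by
  constructor
  · rintro ⟨⟨c₁, c₂, c₃, hc, rfl⟩, hg⟩
    rw [g5_conj_diagonal] at hg
    have h : c₂ = c₁ := by simpa using congr_fun₂ hg 0 0
    subst h
    refine ⟨-c₂, ?_⟩
    dsimp only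
    rw [smul_diagonal_neg_one_four, neg_neg, show 4 * -c₂ = c₃ by linear_combination -hc]
  · rintro ⟨c, rfl⟩
    dsimp only
    rw [smul_diagonal_neg_one_four]
    exact ⟨⟨-c, -c, 4 * c, by ring, rfl⟩, g5_conj_diagonal _ _ _⟩

theorem statement10 :
    ({X : Matrix (Fin 5) (Fin 5) ℂ | X.trace = 0 ∧
        ∀ (A B : Mat2) (c : ℂ), A ∈ SU2 → B ∈ SU2 → ‖c‖ = 1 →
          bd5 A B c * X * (bd5 A B c)⁻¹ = X}
      = diagSet) ∧
    Module.finrank ℂ ↥(Submodule.span ℂ diagSet) = 2 ∧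
    (∀ c₁ c₂ c₃ : ℂ,
      g5 * Matrix.diagonal ![c₁, c₁, c₂, c₂, c₃] * g5⁻¹
        = Matrix.diagonal ![c₂, c₂, c₁, c₁, c₃]) ∧
    ({X : Matrix (Fin 5) (Fin 5) ℂ | X.trace = 0 ∧
        (∀ (A B : Mat2) (c : ℂ), A ∈ SU2 → B ∈ SU2 → ‖c‖ = 1 →
          bd5 A B c * X * (bd5 A B c)⁻¹ = X) ∧ g5 * X * g5⁻¹ = X}
      = Set.range (fun c : ℂ => c • Matrix.diagonal ![-1, -1, -1, -1, 4])) := by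
  have hK : {X : Matrix (Fin 5) (Fin 5) ℂ | X.trace = 0 ∧
      ∀ (A B : Mat2) (c : ℂ), A ∈ SU2 → B ∈ SU2 → ‖c‖ = 1 →
        bd5 A B c * X * (bd5 A B c)⁻¹ = X} = diagSet := by
    ext X
    rw [Set.mem_ofPred_eq, forall_bd5_conj_eq_self_iff, mem_diagSet_iff_commute]
  refine ⟨hK, finrank_span_diagSet, g5_conj_diagonal, ?_⟩
  ext X
  rw [← mem_diagSet_and_g5_conj_iff, ← hK]
  simp only [Set.mem_ofPred_eq, and_assoc]
end
end

section
/- Let p ≥ 1 be a natural number and consider V_{2p} with the SU(2)-action ρ_{2p}. Then (i) the subspace of f ∈ V_{2p} with ρ_{2p}(diag(λ, λ̄))f = f for all complex λ with |λ| = 1 equals the one-dimensional span ℂ·z₀^p z₁^p; (ii) ρ_{2p}(J)(z₀^p z₁^p) = (−1)^p·z₀^p z₁^p for J := [[0,1],[−1,0]]; consequently the subspace of V_{2p} fixed by the subgroup generated by the diagonal torus and J equals ℂ·z₀^p z₁^p when p is even, and {0} when p is odd. -/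
/-!
The diagonal torus acts on the monomial `z₀^a z₁^b` by the character `λ^a λ̄^b`, which is
trivial on the unit circle only when `a = b`: evaluated at a primitive `(a + b + 1)`-th root of
unity `ζ` it is `ζ^(a - b)`, and `|a - b| < a + b + 1`. Hence a torus-invariant form of degree
`2p` is a multiple of `z₀^p z₁^p`. The Weyl element `J` sends `z₀ ↦ -z₁`, `z₁ ↦ z₀`, so it
multiplies `z₀^p z₁^p` by `(-1)^p`.
-/

open MvPolynomial

noncomputable section

abbrev P2 : Type := MvPolynomial (Fin 2) ℂ

/-- The substitution action `(ρ(g) f)(z₀,z₁) = f((z₀,z₁)g)`. -/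
def polyAct (g : Mat2) : P2 →ₗ[ℂ] P2 :=
  (MvPolynomial.aeval
    (fun j : Fin 2 => ∑ i : Fin 2, MvPolynomial.C (g i j) * MvPolynomial.X i) :
      P2 →ₐ[ℂ] P2).toLinearMap

def Jmat : Mat2 := !![0, 1; -1, 0]

/-- The torus element diag(λ, λ̄). -/
def dmat (lam : ℂ) : Mat2 := !![lam, 0; 0, (starRingEnd ℂ) lam]

open ComplexConjugate

theorem Complex.eq_of_forall_pow_mul_conj_pow_eq_one {a b : ℕ}
    (h : ∀ z : ℂ, ‖z‖ = 1 → z ^ a * conj z ^ b = 1) : a = b := by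
  have hN : a + b + 1 ≠ 0 := by omega
  have hζ := Complex.isPrimitiveRoot_exp (a + b + 1) hN
  set ζ := Complex.exp (2 * Real.pi * Complex.I / ↑(a + b + 1))
  have hnorm : ‖ζ‖ = 1 := hζ.norm'_eq_one hN
  have hne : ζ ≠ 0 := by rintro h0; simp [h0] at hnorm
  have hpow : ζ ^ ((a : ℤ) - b) = 1 := by
    rw [zpow_sub₀ hne, zpow_natCast, zpow_natCast, div_eq_mul_inv, ← inv_pow,
      Complex.inv_eq_conj hnorm, h ζ hnorm]
  have hdvd := (hζ.zpow_eq_one_iff_dvd _).mp hpow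
  have : (a : ℤ) - b = 0 := Int.eq_zero_of_abs_lt_dvd hdvd (by rw [abs_lt]; push_cast; omega)
  omega

section polyAct

variable (g : Mat2)

theorem polyAct_C (a : ℂ) : polyAct g (C a) = C a := aeval_C _ _

theorem polyAct_X (j : Fin 2) : polyAct g (X j) = ∑ i, C (g i j) * X i := aeval_X _ _

theorem polyAct_mul (f h : P2) : polyAct g (f * h) = polyAct g f * polyAct g h :=
  map_mul (aeval _ : P2 →ₐ[ℂ] P2) f h

theorem polyAct_pow (f : P2) (n : ℕ) : polyAct g (f ^ n) = polyAct g f ^ n :=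
  map_pow (aeval _ : P2 →ₐ[ℂ] P2) f n

end polyAct

theorem polyAct_dmat_X_zero (lam : ℂ) : polyAct (dmat lam) (X 0) = C lam * X 0 := by
  simp [polyAct_X, dmat]

theorem polyAct_dmat_X_one (lam : ℂ) : polyAct (dmat lam) (X 1) = C (conj lam) * X 1 := by
  simp [polyAct_X, dmat]

theorem polyAct_Jmat_X_zero : polyAct Jmat (X 0) = -X 1 := by simp [polyAct_X, Jmat]

theorem polyAct_Jmat_X_one : polyAct Jmat (X 1) = X 0 := by simp [polyAct_X, Jmat]

theorem polyAct_dmat_monomial (lam : ℂ) (d : Fin 2 →₀ ℕ) (a : ℂ) :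
    polyAct (dmat lam) (monomial d a) = monomial d (lam ^ d 0 * conj lam ^ d 1 * a) := by
  simp only [monomial_fin_two, polyAct_mul, polyAct_pow, polyAct_C, polyAct_dmat_X_zero,
    polyAct_dmat_X_one, C_mul, C_pow]
  ring

theorem coeff_polyAct_dmat (lam : ℂ) (f : P2) (d : Fin 2 →₀ ℕ) :
    coeff d (polyAct (dmat lam) f) = lam ^ d 0 * conj lam ^ d 1 * coeff d f := by
  induction f using MvPolynomial.induction_on' with
  | monomial e a =>
    rw [polyAct_dmat_monomial, coeff_monomial, coeff_monomial]
    split_ifs with h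
    · rw [h]
    · rw [mul_zero]
  | add f h hf hh => rw [map_add, coeff_add, coeff_add, hf, hh, mul_add]

theorem polyAct_Jmat_X_zero_pow_mul_X_one_pow (p : ℕ) :
    polyAct Jmat (X 0 ^ p * X 1 ^ p : P2) = ((-1 : ℂ) ^ p) • (X 0 ^ p * X 1 ^ p : P2) := by
  rw [polyAct_mul, polyAct_pow, polyAct_pow, polyAct_Jmat_X_zero, polyAct_Jmat_X_one,
    smul_eq_C_mul, C_pow, map_neg, map_one, neg_pow (X 1 : P2)]
  ring

theorem polyAct_dmat_X_zero_pow_mul_X_one_pow (p : ℕ) {lam : ℂ} (hlam : ‖lam‖ = 1) :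
    polyAct (dmat lam) (X 0 ^ p * X 1 ^ p : P2) = X 0 ^ p * X 1 ^ p := by
  rw [polyAct_mul, polyAct_pow, polyAct_pow, polyAct_dmat_X_zero, polyAct_dmat_X_one, mul_pow,
    mul_pow, mul_mul_mul_comm, ← mul_pow, ← C_mul, Complex.mul_conj', hlam]
  simp

def IsTorusInvariant (f : P2) : Prop := ∀ lam : ℂ, ‖lam‖ = 1 → polyAct (dmat lam) f = f

theorem IsTorusInvariant.eq_of_coeff_ne_zero {f : P2} (hf : IsTorusInvariant f) {d : Fin 2 →₀ ℕ}
    (hd : coeff d f ≠ 0) : d 0 = d 1 := by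
  refine Complex.eq_of_forall_pow_mul_conj_pow_eq_one fun lam hlam => ?_
  have hcoeff := congrArg (coeff d) (hf lam hlam)
  rw [coeff_polyAct_dmat] at hcoeff
  exact mul_right_cancel₀ hd (hcoeff.trans (one_mul _).symm)

theorem MvPolynomial.IsHomogeneous.add_eq_of_coeff_ne_zero {R : Type*} [CommSemiring R]
    {f : MvPolynomial (Fin 2) R} {n : ℕ} (hf : f.IsHomogeneous n) {d : Fin 2 →₀ ℕ}
    (hd : coeff d f ≠ 0) : d 0 + d 1 = n := by
  rw [← hf hd, ← Fin.sum_univ_two, ← Finsupp.degree_eq_sum, Finsupp.degree_eq_weight_one]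
  rfl

theorem mem_homogeneousSubmodule_and_isTorusInvariant_iff (p : ℕ) (f : P2) :
    f ∈ homogeneousSubmodule (Fin 2) ℂ (2 * p) ∧ IsTorusInvariant f ↔
      ∃ c : ℂ, c • (X 0 ^ p * X 1 ^ p : P2) = f := by
  constructor
  · rintro ⟨hhom, hinv⟩
    rw [mem_homogeneousSubmodule] at hhom
    set e : Fin 2 →₀ ℕ := Finsupp.single 0 p + Finsupp.single 1 p
    have hm : (X 0 ^ p * X 1 ^ p : P2) = monomial e 1 := by simp [monomial_fin_two, e]
    refine ⟨coeff e f, ?_⟩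
    ext d
    rw [hm, coeff_smul, coeff_monomial, smul_eq_mul, mul_ite, mul_one, mul_zero]
    split_ifs with hd
    · rw [hd]
    · by_contra hne
      have h01 := hinv.eq_of_coeff_ne_zero (Ne.symm hne)
      have hsum := hhom.add_eq_of_coeff_ne_zero (Ne.symm hne)
      exact hd (Finsupp.ext (Fin.forall_fin_two.2 ⟨by simp [e]; omega, by simp [e]; omega⟩))
  · rintro ⟨c, rfl⟩
    refine ⟨Submodule.smul_mem _ c ?_, fun lam hlam => ?_⟩
    · rw [mem_homogeneousSubmodule, two_mul]
      exact (isHomogeneous_X_pow _ p).mul (isHomogeneous_X_pow _ p)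
    · rw [map_smul, polyAct_dmat_X_zero_pow_mul_X_one_pow p hlam]

theorem polyAct_Jmat_smul_eq_self_iff (p : ℕ) (c : ℂ) :
    polyAct Jmat (c • (X 0 ^ p * X 1 ^ p : P2)) = c • (X 0 ^ p * X 1 ^ p : P2) ↔
      (-1) ^ p * c = c := by
  have hm : (X 0 ^ p * X 1 ^ p : P2) ≠ 0 := by simp [X_ne_zero]
  rw [map_smul, polyAct_Jmat_X_zero_pow_mul_X_one_pow, smul_smul, mul_comm]
  exact (smul_left_injective ℂ hm).eq_iff

theorem mem_homogeneousSubmodule_and_isTorusInvariant_and_polyAct_Jmat_iff (p : ℕ) (f : P2) :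
    f ∈ homogeneousSubmodule (Fin 2) ℂ (2 * p) ∧ IsTorusInvariant f ∧ polyAct Jmat f = f ↔
      ∃ c : ℂ, (-1) ^ p * c = c ∧ c • (X 0 ^ p * X 1 ^ p : P2) = f := by
  rw [← and_assoc, mem_homogeneousSubmodule_and_isTorusInvariant_iff]
  constructor
  · rintro ⟨⟨c, rfl⟩, hJ⟩
    exact ⟨c, (polyAct_Jmat_smul_eq_self_iff p c).1 hJ, rfl⟩
  · rintro ⟨c, hc, rfl⟩
    exact ⟨⟨c, rfl⟩, (polyAct_Jmat_smul_eq_self_iff p c).2 hc⟩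

theorem statement17_general (p : ℕ) :
    ({f : P2 | f ∈ MvPolynomial.homogeneousSubmodule (Fin 2) ℂ (2 * p) ∧
        ∀ lam : ℂ, ‖lam‖ = 1 → polyAct (dmat lam) f = f}
      = Set.range (fun c : ℂ => c • (X 0 ^ p * X 1 ^ p : P2))) ∧
    polyAct Jmat (X 0 ^ p * X 1 ^ p : P2) = ((-1 : ℂ) ^ p) • (X 0 ^ p * X 1 ^ p : P2) ∧
    (Even p →
      {f : P2 | f ∈ MvPolynomial.homogeneousSubmodule (Fin 2) ℂ (2 * p) ∧
          (∀ lam : ℂ, ‖lam‖ = 1 → polyAct (dmat lam) f = f) ∧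
          polyAct Jmat f = f}
        = Set.range (fun c : ℂ => c • (X 0 ^ p * X 1 ^ p : P2))) ∧
    (Odd p →
      {f : P2 | f ∈ MvPolynomial.homogeneousSubmodule (Fin 2) ℂ (2 * p) ∧
          (∀ lam : ℂ, ‖lam‖ = 1 → polyAct (dmat lam) f = f) ∧
          polyAct Jmat f = f}
        = {0}) := by
  refine ⟨Set.ext (mem_homogeneousSubmodule_and_isTorusInvariant_iff p),
    polyAct_Jmat_X_zero_pow_mul_X_one_pow p, fun hp => Set.ext fun f => ?_,
    fun hp => Set.ext fun f => ?_⟩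
  · refine (mem_homogeneousSubmodule_and_isTorusInvariant_and_polyAct_Jmat_iff p f).trans ?_
    simp [hp.neg_one_pow]
  · refine (mem_homogeneousSubmodule_and_isTorusInvariant_and_polyAct_Jmat_iff p f).trans ?_
    simp [hp.neg_one_pow, neg_eq_self, eq_comm (a := (0 : P2))]

theorem statement17 (p : ℕ) (hp : 1 ≤ p) :
    ({f : P2 | f ∈ MvPolynomial.homogeneousSubmodule (Fin 2) ℂ (2 * p) ∧
        ∀ lam : ℂ, ‖lam‖ = 1 → polyAct (dmat lam) f = f}
      = Set.range (fun c : ℂ => c • (X 0 ^ p * X 1 ^ p : P2))) ∧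
    polyAct Jmat (X 0 ^ p * X 1 ^ p : P2) = ((-1 : ℂ) ^ p) • (X 0 ^ p * X 1 ^ p : P2) ∧
    (Even p →
      {f : P2 | f ∈ MvPolynomial.homogeneousSubmodule (Fin 2) ℂ (2 * p) ∧
          (∀ lam : ℂ, ‖lam‖ = 1 → polyAct (dmat lam) f = f) ∧
          polyAct Jmat f = f}
        = Set.range (fun c : ℂ => c • (X 0 ^ p * X 1 ^ p : P2))) ∧
    (Odd p →
      {f : P2 | f ∈ MvPolynomial.homogeneousSubmodule (Fin 2) ℂ (2 * p) ∧
          (∀ lam : ℂ, ‖lam‖ = 1 → polyAct (dmat lam) f = f) ∧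
          polyAct Jmat f = f}
        = {0}) :=
  statement17_general p

end
end
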